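/- arXiv:1411.7125 — 3 statements merged into one kernel-verified Lean document; each statement's English description precedes it below -/
import Mathlib

section
/- The regulator equations XS = AX + BU + E, 0 = CX + D have a solution (X, U) for all E, D if and only if for all λ ∈ σ(S), rank([A − λI, B; C, 0]) = n + p. -/
/-!
Solvability of the regulator equations for all `E, D` is surjectivity of the linear map
`(X, U) ↦ (X S - A X - B U, -C X)`. If it fails, a nonzero functional
`(P, Q) ↦ tr (W P) + tr (V Q)` vanishes on its image, which means `S W = W A + V C` and `W B = 0`.
Over an algebraically closed field, the row vectors `u` with `u W = u V = 0` contain `u` as soon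
as they contain `u (S - μ)` for an eigenvalue `μ` of `S`, since then `(u W, u V)` is a left null
vector of the Rosenbrock matrix at `μ`; hence they contain every generalised eigenspace of `Sᵀ`,
so `W = V = 0`.

Conversely, pairing the equations with a left null vector `(w, z)` of the Rosenbrock matrix at an
eigenvalue `μ` and an eigenvector `v` eliminates `X` and `U`, leaving `w E v + z D v = 0` for all
`E, D`; matrix units for `E` and `D` then give `w = z = 0`.
-/

open Matrix

theorem Submodule.eq_top_of_sub_smul_apply_mem {K V : Type*} [Field K] [IsAlgClosed K]
    [AddCommGroup V] [Module K V] [FiniteDimensional K V] (f : Module.End K V)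
    {N : Submodule K V} (hN : ∀ μ, f.HasEigenvalue μ → ∀ v, (f - μ • 1) v ∈ N → v ∈ N) :
    N = ⊤ := by
  rw [eq_top_iff, ← f.iSup_maxGenEigenspace_eq_top, iSup_le_iff]
  intro μ v hv
  obtain ⟨k, hk⟩ := (f.mem_maxGenEigenspace μ v).1 hv
  clear hv
  induction k generalizing v with
  | zero => simp_all
  | succ k ih =>
    by_cases hv0 : v = 0
    · simp [hv0]
    have hμ : f.HasGenEigenvalue μ (k + 1) := by
      rw [Module.End.hasGenEigenvalue_iff, Submodule.ne_bot_iff]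
      exact ⟨v, Module.End.mem_genEigenspace_nat.2 hk, hv0⟩
    refine hN μ (Module.End.hasEigenvalue_of_hasGenEigenvalue hμ) v (ih ?_)
    rwa [← Module.End.mul_apply, ← pow_succ]

namespace Matrix

variable {n m p q : Type*} [Fintype n] [Fintype q]

theorem rank_eq_card_height_iff {K : Type*} [Field K] {M : Matrix q n K} :
    M.rank = Fintype.card q ↔ ∀ r : q → K, r ᵥ* M = 0 → r = 0 := by
  rw [rank_eq_finrank_span_row, ← Set.finrank, eq_comm,
    ← linearIndependent_iff_card_eq_finrank_span, ← vecMul_injective_iff]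
  exact injective_iff_map_eq_zero M.vecMulLinear

theorem mem_spectrum_transpose {K : Type*} [Field K] [DecidableEq n] {A : Matrix n n K} {μ : K} :
    μ ∈ spectrum K Aᵀ ↔ μ ∈ spectrum K A := by
  rw [mem_spectrum_iff_isRoot_charpoly, mem_spectrum_iff_isRoot_charpoly, charpoly_transpose]

theorem exists_trace_mul_eq {R : Type*} [CommSemiring R] (φ : Matrix n q R →ₗ[R] R) :
    ∃ W : Matrix q n R, ∀ P, φ P = (W * P).trace := by
  classical
  refine ⟨of fun j i => φ (single i j 1), fun P => ?_⟩
  change φ P = (traceLinearMap q R R ∘ₗ mulLeftLinearMap q R _) P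
  congr 1
  refine ext_linearMap (R := R) fun i j => LinearMap.ext fun c => ?_
  simpa [trace_mul_single, smul_single, mul_comm] using φ.map_smul c (single i j 1)

variable {R : Type*} [CommRing R]

section Regulator

variable [Fintype m] (A : Matrix n n R) (B : Matrix n m R) (C : Matrix p n R) (S : Matrix q q R)

def regulatorMap : Matrix n q R × Matrix m q R →ₗ[R] Matrix n q R × Matrix p q R :=
  ((mulRightLinearMap n R S - mulLeftLinearMap q R A) ∘ₗ LinearMap.fst R _ _
    - mulLeftLinearMap q R B ∘ₗ LinearMap.snd R _ _).prod
    (-(mulLeftLinearMap q R C ∘ₗ LinearMap.fst R _ _))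

@[simp]
theorem regulatorMap_apply (X : Matrix n q R) (U : Matrix m q R) :
    regulatorMap A B C S (X, U) = (X * S - A * X - B * U, -(C * X)) :=
  rfl

theorem surjective_regulatorMap_iff :
    Function.Surjective (regulatorMap A B C S) ↔
      ∀ (E : Matrix n q R) (D : Matrix p q R), ∃ (X : Matrix n q R) (U : Matrix m q R),
        X * S = A * X + B * U + E ∧ C * X + D = 0 := by
  simp only [Function.Surjective, Prod.forall, Prod.exists, regulatorMap_apply, Prod.mk.injEq]
  refine forall₂_congr fun E D => exists₂_congr fun X U => and_congr ?_ ?_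
  · rw [sub_sub, sub_eq_iff_eq_add, add_comm E, add_comm]
  · rw [neg_eq_iff_eq_neg, add_eq_zero_iff_eq_neg]

end Regulator

section Rosenbrock

variable [Fintype p] [DecidableEq n] (A : Matrix n n R) (B : Matrix n m R) (C : Matrix p n R)

def rosenbrockMatrix (μ : R) : Matrix (n ⊕ p) (n ⊕ m) R :=
  fromBlocks (A - μ • 1) B C 0

theorem sumElim_vecMul_rosenbrockMatrix (μ : R) (w : n → R) (z : p → R) :
    Sum.elim w z ᵥ* rosenbrockMatrix A B C μ =
      Sum.elim (w ᵥ* (A - μ • 1) + z ᵥ* C) (w ᵥ* B) := by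
  simp [rosenbrockMatrix, vecMul_fromBlocks]

end Rosenbrock

theorem dotProduct_mulVec_add_dotProduct_mulVec_eq_zero [Fintype m] [Fintype p] [DecidableEq n]
    {A : Matrix n n R} {B : Matrix n m R} {C : Matrix p n R} {S : Matrix q q R}
    {E X : Matrix n q R} {D : Matrix p q R} {U : Matrix m q R} {μ : R} {v : q → R} {w : n → R}
    {z : p → R} (hX : X * S = A * X + B * U + E) (hD : C * X + D = 0) (hv : S *ᵥ v = μ • v)
    (hw : w ᵥ* (A - μ • 1) + z ᵥ* C = 0) (hwB : w ᵥ* B = 0) :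
    w ⬝ᵥ (E *ᵥ v) + z ⬝ᵥ (D *ᵥ v) = 0 := by
  obtain rfl : E = X * S - A * X - B * U := by rw [hX]; abel
  obtain rfl : D = -(C * X) := eq_neg_of_add_eq_zero_right hD
  calc _ = -((w ᵥ* (A - μ • 1) + z ᵥ* C) ⬝ᵥ (X *ᵥ v)) - (w ᵥ* B) ⬝ᵥ (U *ᵥ v) := by
        simp only [sub_mulVec, neg_mulVec, ← mulVec_mulVec, hv, mulVec_smul, dotProduct_sub,
          dotProduct_neg, dotProduct_smul, dotProduct_mulVec, vecMul_sub, vecMul_smul, vecMul_one,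
          add_vecMul, sub_vecMul, smul_vecMul, add_dotProduct, sub_dotProduct, smul_dotProduct,
          smul_eq_mul]
        ring
    _ = 0 := by simp [hw, hwB]

theorem surjective_regulatorMap_of_dual {K : Type*} [Field K] [Fintype m] [Fintype p]
    {A : Matrix n n K} {B : Matrix n m K} {C : Matrix p n K} {S : Matrix q q K}
    (h : ∀ (W : Matrix q n K) (V : Matrix q p K), S * W = W * A + V * C → W * B = 0 →
      W = 0 ∧ V = 0) :
    Function.Surjective (regulatorMap A B C S) := by
  by_contra hT
  obtain ⟨φ, hφ0, hφT⟩ := (LinearMap.range (regulatorMap A B C S)).exists_le_ker_of_lt_top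
    (lt_top_iff_ne_top.2 (LinearMap.range_eq_top.not.2 hT))
  obtain ⟨W, hW⟩ := exists_trace_mul_eq (φ ∘ₗ LinearMap.inl K _ _)
  obtain ⟨V, hV⟩ := exists_trace_mul_eq (φ ∘ₗ LinearMap.inr K _ _)
  have hφ : ∀ P Q, φ (P, Q) = (W * P).trace + (V * Q).trace := fun P Q => by
    rw [← hW, ← hV, LinearMap.comp_apply, LinearMap.comp_apply, ← map_add, LinearMap.inl_apply,
      LinearMap.inr_apply, Prod.mk_add_mk, add_zero, zero_add]
  have hφT' : ∀ (X : Matrix n q K) (U : Matrix m q K),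
      (W * (X * S - A * X - B * U)).trace - (V * (C * X)).trace = 0 :=
    fun X U => by simpa [hφ, sub_eq_add_neg] using hφT ⟨(X, U), rfl⟩
  obtain ⟨rfl, rfl⟩ : W = 0 ∧ V = 0 := by
    refine h W V ?_ ?_ <;> rw [ext_iff_trace_mul_right] <;> intro X
    · have := hφT' X 0
      simp only [Matrix.mul_sub, Matrix.mul_zero, sub_zero, trace_sub, ← Matrix.mul_assoc,
        trace_mul_cycle W X S] at this
      simp only [Matrix.add_mul, trace_add]
      linear_combination this
    · simpa [Matrix.mul_assoc] using hφT' 0 X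
  exact hφ0 (LinearMap.ext fun ⟨P, Q⟩ => by simp [hφ])

theorem dual_regulator_eq_zero {L : Type*} [Field L] [IsAlgClosed L] [Fintype p] [DecidableEq n]
    [DecidableEq q] {A : Matrix n n L} {B : Matrix n m L} {C : Matrix p n L} {S : Matrix q q L}
    (hA : ∀ μ ∈ spectrum L S, ∀ r, r ᵥ* rosenbrockMatrix A B C μ = 0 → r = 0)
    {W : Matrix q n L} {V : Matrix q p L} (hSW : S * W = W * A + V * C) (hWB : W * B = 0) :
    W = 0 ∧ V = 0 := by
  have hN : LinearMap.ker W.vecMulLinear ⊓ LinearMap.ker V.vecMulLinear = ⊤ := by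
    refine Submodule.eq_top_of_sub_smul_apply_mem (Sᵀ.toLin') fun μ hμ u hu => ?_
    rw [Module.End.hasEigenvalue_iff_mem_spectrum, spectrum_toLin', mem_spectrum_transpose] at hμ
    simp only [Submodule.mem_inf, LinearMap.mem_ker, vecMulLinear_apply, LinearMap.sub_apply,
      toLin'_apply, mulVec_transpose, LinearMap.smul_apply, Module.End.one_apply,
      sub_vecMul, vecMul_vecMul, hSW, vecMul_add] at hu ⊢
    have := hA μ hμ (Sum.elim (u ᵥ* W) (u ᵥ* V)) ?_
    · rwa [← Sum.elim_zero_zero, Sum.elim_eq_iff] at this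
    rw [sumElim_vecMul_rosenbrockMatrix, ← Sum.elim_zero_zero, Sum.elim_eq_iff]
    refine ⟨?_, by rw [vecMul_vecMul, hWB, vecMul_zero]⟩
    rw [← hu.1, vecMul_sub, vecMul_smul, vecMul_one, smul_vecMul, vecMul_vecMul, vecMul_vecMul]
    abel
  simp only [Submodule.eq_top_iff', Submodule.mem_inf, LinearMap.mem_ker, vecMulLinear_apply] at hN
  exact ⟨ext_iff_vecMul.2 fun u => by simp [(hN u).1], ext_iff_vecMul.2 fun u => by simp [(hN u).2]⟩

section Extension

variable {K L : Type*} [Field K] [Field L] [Algebra K L] [Fintype m] [Fintype p] [DecidableEq n]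
  [DecidableEq q] (A : Matrix n n K) (B : Matrix n m K) (C : Matrix p n K) (S : Matrix q q K)

theorem vecMul_rosenbrockMatrix_eq_zero_of_solvable
    (hsol : ∀ (E : Matrix n q K) (D : Matrix p q K), ∃ (X : Matrix n q K) (U : Matrix m q K),
      X * S = A * X + B * U + E ∧ C * X + D = 0)
    {μ : L} (hμ : μ ∈ spectrum L (S.map (algebraMap K L))) {r : n ⊕ p → L}
    (hr : r ᵥ* rosenbrockMatrix (A.map (algebraMap K L)) (B.map (algebraMap K L))
      (C.map (algebraMap K L)) μ = 0) :
    r = 0 := by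
  classical
  rw [← spectrum_toLin', ← Module.End.hasEigenvalue_iff_mem_spectrum] at hμ
  obtain ⟨v, hv⟩ := hμ.exists_hasEigenvector
  obtain ⟨j, hj⟩ : ∃ j, v j ≠ 0 := Function.ne_iff.1 hv.2
  rw [← Sum.elim_comp_inl_inr r, sumElim_vecMul_rosenbrockMatrix, ← Sum.elim_zero_zero,
    Sum.elim_eq_iff] at hr
  have key : ∀ (E : Matrix n q K) (D : Matrix p q K),
      (r ∘ Sum.inl) ⬝ᵥ (E.map (algebraMap K L) *ᵥ v)
        + (r ∘ Sum.inr) ⬝ᵥ (D.map (algebraMap K L) *ᵥ v) = 0 := fun E D => by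
    obtain ⟨X, U, hX, hD⟩ := hsol E D
    refine dotProduct_mulVec_add_dotProduct_mulVec_eq_zero (X := X.map (algebraMap K L))
      (U := U.map (algebraMap K L)) ?_ ?_ hv.apply_eq_smul hr.1 hr.2
    · simpa [Matrix.map_mul, Matrix.map_add] using congrArg (·.map (algebraMap K L)) hX
    · simpa [Matrix.map_mul, Matrix.map_add] using congrArg (·.map (algebraMap K L)) hD
  ext (i | i)
  · simpa [single_mulVec, dotProduct, Function.update_apply, hj] using key (single i j 1) 0
  · simpa [single_mulVec, dotProduct, Function.update_apply, hj] using key 0 (single i j 1)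

theorem regulator_solvable_iff_rank_rosenbrockMatrix [IsAlgClosed L] :
    (∀ (E : Matrix n q K) (D : Matrix p q K), ∃ (X : Matrix n q K) (U : Matrix m q K),
      X * S = A * X + B * U + E ∧ C * X + D = 0) ↔
    ∀ μ ∈ spectrum L (S.map (algebraMap K L)),
      (rosenbrockMatrix (A.map (algebraMap K L)) (B.map (algebraMap K L))
        (C.map (algebraMap K L)) μ).rank = Fintype.card n + Fintype.card p := by
  simp_rw [← Fintype.card_sum, rank_eq_card_height_iff]
  refine ⟨fun hsol μ hμ r hr => vecMul_rosenbrockMatrix_eq_zero_of_solvable A B C S hsol hμ hr,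
    fun h => (surjective_regulatorMap_iff A B C S).1 <|
      surjective_regulatorMap_of_dual fun W V hSW hWB => ?_⟩
  obtain ⟨hW, hV⟩ := dual_regulator_eq_zero h (W := W.map (algebraMap K L))
    (V := V.map (algebraMap K L)) (by simp [← Matrix.map_mul, ← Matrix.map_add, hSW])
    (by simp [← Matrix.map_mul, hWB])
  exact ⟨map_injective (algebraMap K L).injective (by simpa using hW),
    map_injective (algebraMap K L).injective (by simpa using hV)⟩

end Extension

end Matrix

theorem stmt_14 (n m p q : ℕ)
    (A : Matrix (Fin n) (Fin n) ℝ) (B : Matrix (Fin n) (Fin m) ℝ)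
    (C : Matrix (Fin p) (Fin n) ℝ) (S : Matrix (Fin q) (Fin q) ℝ) :
    (∀ (E : Matrix (Fin n) (Fin q) ℝ) (D : Matrix (Fin p) (Fin q) ℝ),
        ∃ (X : Matrix (Fin n) (Fin q) ℝ) (U : Matrix (Fin m) (Fin q) ℝ),
          X * S = A * X + B * U + E ∧ C * X + D = 0) ↔
      ∀ μ ∈ spectrum ℂ (S.map (algebraMap ℝ ℂ)),
        (Matrix.fromBlocks (A.map (algebraMap ℝ ℂ) - μ • 1) (B.map (algebraMap ℝ ℂ))
            (C.map (algebraMap ℝ ℂ)) 0).rank = n + p := by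
  simpa only [Fintype.card_fin, rosenbrockMatrix] using
    regulator_solvable_iff_rank_rosenbrockMatrix (L := ℂ) A B C S
end

section
/- Let L₁ ∈ ℝ^{m×m} be symmetric positive definite, P̃ ∈ ℝ^{q×q} symmetric positive definite satisfying P̃Sᵀ + SP̃ + I − P̃FᵀFP̃ = 0. Then there exists α₀ > 0 such that for all α ≥ α₀, the matrix L₁ ⊗ (P̃⁻¹S + SᵀP̃⁻¹) − (2α+1) L₁² ⊗ FᵀF is negative definite. -/
/-!
Multiplying the Riccati equation by `P⁻¹` on both sides gives
`P⁻¹ S + Sᵀ P⁻¹ = FᵀF - P⁻²`, so the matrix in question equals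
`((2α+1) L₁² - L₁) ⊗ FᵀF + L₁ ⊗ P⁻²`. The second summand is positive definite, and the
first is positive semidefinite as soon as `2α+1` bounds the spectrum of `L₁⁻¹`, because
`c L₁² - L₁ = L₁ (c - L₁⁻¹) L₁`.
-/

open Matrix Kronecker Filter

namespace Matrix

variable {n : Type*} [Fintype n] [DecidableEq n]

theorem inv_mul_add_mul_inv_of_riccati {R : Type*} [CommRing R] {P S T G : Matrix n n R}
    (hP : IsUnit P.det) (h : P * T + S * P + 1 - P * G * P = 0) :
    P⁻¹ * S + T * P⁻¹ = G - P⁻¹ * P⁻¹ := by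
  have h' := congr(P⁻¹ * $h * P⁻¹)
  simp only [mul_add, add_mul, mul_sub, sub_mul, ← mul_assoc, nonsing_inv_mul _ hP, one_mul,
    mul_zero, zero_mul] at h'
  simp only [mul_assoc, mul_nonsing_inv _ hP, mul_one] at h'
  rw [eq_sub_iff_add_eq, ← sub_eq_zero, ← h']
  abel

theorem IsHermitian.eventually_posSemidef_smul_one_sub {B : Matrix n n ℝ} (hB : B.IsHermitian) :
    ∀ᶠ c : ℝ in atTop, (c • (1 : Matrix n n ℝ) - B).PosSemidef := by
  obtain ⟨M, hM⟩ := B.finite_spectrum.bddAbove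
  filter_upwards [eventually_ge_atTop M] with c hc
  refine posSemidef_iff_isHermitian_and_spectrum_nonneg.2
    ⟨(isHermitian_one.smul (IsSelfAdjoint.all c)).sub hB, ?_⟩
  rw [← Algebra.algebraMap_eq_smul_one, ← spectrum.singleton_sub_eq]
  rintro _ ⟨c, rfl, b, hb, rfl⟩
  exact sub_nonneg.2 ((hM hb).trans hc)

theorem PosDef.eventually_posSemidef_smul_mul_self_sub {L : Matrix n n ℝ} (hL : L.PosDef) :
    ∀ᶠ c : ℝ in atTop, (c • (L * L) - L).PosSemidef := by
  filter_upwards [hL.inv.isHermitian.eventually_posSemidef_smul_one_sub] with c hc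
  have hconj : c • (L * L) - L = L * (c • 1 - L⁻¹) * Lᴴ := by
    rw [hL.isHermitian.eq, mul_sub, sub_mul, mul_smul_one, mul_nonsing_inv _ hL.det_pos.ne'.isUnit,
      smul_mul_assoc, one_mul]
  rw [hconj]
  exact hc.mul_mul_conjTranspose_same L

end Matrix

theorem stmt_17 (m q l : ℕ)
    (L₁ : Matrix (Fin m) (Fin m) ℝ) (hL₁ : L₁.PosDef)
    (S : Matrix (Fin q) (Fin q) ℝ) (F : Matrix (Fin l) (Fin q) ℝ)
    (P : Matrix (Fin q) (Fin q) ℝ) (hP : P.PosDef)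
    (hare : P * Sᵀ + S * P + 1 - P * Fᵀ * F * P = 0) :
    ∃ α₀ > (0:ℝ), ∀ α ≥ α₀,
      (-(L₁ ⊗ₖ (P⁻¹ * S + Sᵀ * P⁻¹)
          - (2 * α + 1) • ((L₁ * L₁) ⊗ₖ (Fᵀ * F)))).PosDef := by
  have hFF : (Fᵀ * F).PosSemidef := by simpa using posSemidef_conjTranspose_mul_self F
  have hPP : (P⁻¹ * P⁻¹).PosDef := by
    have := PosDef.conjTranspose_mul_self P⁻¹ (mulVec_injective_of_isUnit hP.inv.isUnit)
    rwa [hP.inv.isHermitian.eq] at this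
  have h2α : Tendsto (fun α : ℝ ↦ 2 * α + 1) atTop atTop :=
    tendsto_atTop_add_const_right _ 1 (tendsto_id.const_mul_atTop two_pos)
  obtain ⟨α₀, hα₀⟩ := ((h2α.eventually hL₁.eventually_posSemidef_smul_mul_self_sub).and
    (eventually_gt_atTop 0)).exists_forall_of_atTop
  refine ⟨α₀, (hα₀ α₀ le_rfl).2, fun α hα ↦ ?_⟩
  have hsplit : -(L₁ ⊗ₖ (P⁻¹ * S + Sᵀ * P⁻¹) - (2 * α + 1) • ((L₁ * L₁) ⊗ₖ (Fᵀ * F))) =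
      ((2 * α + 1) • (L₁ * L₁) - L₁) ⊗ₖ (Fᵀ * F) + L₁ ⊗ₖ (P⁻¹ * P⁻¹) := by
    rw [inv_mul_add_mul_inv_of_riccati hP.det_pos.ne'.isUnit (G := Fᵀ * F)
      (by rwa [← Matrix.mul_assoc P Fᵀ F])]
    ext ⟨i, k⟩ ⟨j, l⟩
    simp only [Matrix.neg_apply, Matrix.sub_apply, Matrix.add_apply, Matrix.smul_apply,
      kroneckerMap_apply, smul_eq_mul]
    ring
  rw [hsplit]
  exact .posSemidef_add ((hα₀ α hα).1.kronecker hFF) (hL₁.kronecker hPP)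
end

section
/- Let L be the Laplacian of a directed graph on N nodes partitioned so that nodes 1..M have no in-neighbors, giving L = [[0, 0],[L₂, L₁]]. If each node in M+1..N is reachable by a directed path from some node in 1..M, then every entry of −L₁⁻¹L₂ is nonnegative and every row of −L₁⁻¹L₂ sums to 1. -/
/-!
Extend a vector `z` on the interior nodes by `0` on the source nodes. If `L₁ z ≥ 0` but `z` has a
negative entry, then at a node where the extended vector attains its (negative) minimum the
Laplacian forces every in-neighbour to attain the minimum as well. Following the edges backwards
from a minimum node reaches a source node, where the value is `0`: contradiction. So `L₁` is a
monotone matrix (`L₁ z ≥ 0 ⇒ z ≥ 0`), hence invertible with `L₁⁻¹ ≥ 0`, and `−L₁⁻¹ L₂ ≥ 0`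
because `−L₂ ≥ 0`. The row sums are `1` since `−L₂ 𝟏 = L₁ 𝟏`.
-/

open Matrix

section MinimumPrinciple

variable {V : Type*} [Fintype V] {A : Matrix V V ℝ}

theorem eq_of_isMin_of_mulVec_nonneg (hoff : ∀ i j, i ≠ j → A i j ≤ 0)
    (hrow : ∀ i, ∑ j, A i j = 0) {x : V → ℝ} {v : V} (hmin : ∀ w, x v ≤ x w)
    (hv : 0 ≤ (A *ᵥ x) v) {w : V} (hw : A v w < 0) : x w = x v := by
  have hterm : ∀ u, A v u * (x u - x v) ≤ 0 := by
    intro u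
    rcases eq_or_ne u v with rfl | hu
    · simp
    · exact mul_nonpos_of_nonpos_of_nonneg (hoff v u hu.symm) (sub_nonneg.2 (hmin u))
  -- the row sum vanishes, so `(A x) v` only sees the differences `x u - x v`
  have hsum : (A *ᵥ x) v = ∑ u, A v u * (x u - x v) := by
    simp only [mul_sub, Finset.sum_sub_distrib, ← Finset.sum_mul, hrow, zero_mul, sub_zero]
    rfl
  have hzero : ∑ u, A v u * (x u - x v) = 0 :=
    le_antisymm (Finset.sum_nonpos fun u _ => hterm u) (hsum ▸ hv)
  have hw0 := (Finset.sum_eq_zero_iff_of_nonpos fun u _ => hterm u).1 hzero w (Finset.mem_univ w)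
  rcases mul_eq_zero.1 hw0 with h | h
  · exact absurd h hw.ne
  · linarith

theorem eq_of_reflTransGen_of_isMin (hoff : ∀ i j, i ≠ j → A i j ≤ 0)
    (hrow : ∀ i, ∑ j, A i j = 0) {x : V → ℝ} {m : ℝ} (hmin : ∀ w, m ≤ x w)
    (hsuper : ∀ w, x w = m → 0 ≤ (A *ᵥ x) w) {a b : V}
    (hab : Relation.ReflTransGen (fun u v => A v u < 0) a b) (hb : x b = m) : x a = m := by
  induction hab using Relation.ReflTransGen.head_induction_on with
  | refl => exact hb
  | head hac _ ih =>
    rw [eq_of_isMin_of_mulVec_nonneg hoff hrow (ih ▸ hmin) (hsuper _ ih) hac, ih]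

end MinimumPrinciple

section Blocks

variable {ι κ : Type*} [Fintype ι] [Fintype κ] {L : Matrix (ι ⊕ κ) (ι ⊕ κ) ℝ}

theorem mulVec_sumElim_zero_inr (z : κ → ℝ) (k : κ) :
    (L *ᵥ Sum.elim 0 z) (Sum.inr k) = (L.toBlocks₂₂ *ᵥ z) k := by
  simp [mulVec, dotProduct, Fintype.sum_sum_type, toBlocks₂₂]

theorem nonneg_of_toBlocks₂₂_mulVec_nonneg (hoff : ∀ i j, i ≠ j → L i j ≤ 0)
    (hrow : ∀ i, ∑ j, L i j = 0)
    (hreach : ∀ k : κ, ∃ j : ι,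
      Relation.ReflTransGen (fun u v => L v u < 0) (Sum.inl j) (Sum.inr k))
    {z : κ → ℝ} (hz : 0 ≤ L.toBlocks₂₂ *ᵥ z) : 0 ≤ z := by
  by_contra hneg
  obtain ⟨k₁, hk₁⟩ : ∃ k, z k < 0 := by simpa [Pi.le_def] using hneg
  have : Nonempty (ι ⊕ κ) := ⟨Sum.inr k₁⟩
  let x : ι ⊕ κ → ℝ := Sum.elim 0 z
  obtain ⟨v₀, hv₀⟩ := Finite.exists_min x
  have hm : x v₀ < 0 := (hv₀ (Sum.inr k₁)).trans_lt hk₁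
  have hsuper : ∀ w, x w = x v₀ → 0 ≤ (L *ᵥ x) w := by
    rintro (j | k) hw
    · exact absurd hw.symm (by simpa [x] using hm.ne)
    · rw [mulVec_sumElim_zero_inr]
      exact hz k
  obtain ⟨k₀, rfl⟩ : ∃ k₀, v₀ = Sum.inr k₀ := by
    rcases v₀ with j | k
    · exact absurd hm (by simp [x])
    · exact ⟨k, rfl⟩
  obtain ⟨j, hpath⟩ := hreach k₀
  have hj : x (Sum.inl j) = x (Sum.inr k₀) :=
    eq_of_reflTransGen_of_isMin hoff hrow hv₀ hsuper hpath rfl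
  exact hm.ne hj.symm

theorem toBlocks₂₁_mulVec_one (hrow : ∀ i, ∑ j, L i j = 0) :
    L.toBlocks₂₁ *ᵥ 1 = -(L.toBlocks₂₂ *ᵥ 1) := by
  ext k
  have := hrow (Sum.inr k)
  simp only [Fintype.sum_sum_type] at this
  simp only [mulVec, dotProduct, toBlocks₂₁, toBlocks₂₂, of_apply, Pi.one_apply, mul_one,
    Pi.neg_apply]
  linarith

end Blocks

section MonotoneMatrix

variable {n m : Type*} [Fintype n] [DecidableEq n] {A : Matrix n n ℝ}

theorem isUnit_det_of_mulVec_nonneg_imp (hmono : ∀ z, 0 ≤ A *ᵥ z → 0 ≤ z) : IsUnit A.det := by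
  rw [isUnit_iff_ne_zero]
  intro h0
  obtain ⟨v, hv, hAv⟩ := exists_mulVec_eq_zero_iff.mpr h0
  have h1 := hmono v hAv.ge
  have h2 := hmono (-v) (by rw [mulVec_neg, hAv, neg_zero])
  exact hv (le_antisymm (neg_nonneg.1 h2) h1)

theorem inv_mulVec_nonneg (hmono : ∀ z, 0 ≤ A *ᵥ z → 0 ≤ z) {w : n → ℝ} (hw : 0 ≤ w) :
    0 ≤ A⁻¹ *ᵥ w := by
  apply hmono
  rwa [mulVec_mulVec, mul_nonsing_inv _ (isUnit_det_of_mulVec_nonneg_imp hmono), one_mulVec]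

theorem neg_inv_mul_nonneg (hmono : ∀ z, 0 ≤ A *ᵥ z → 0 ≤ z) {B : Matrix n m ℝ}
    (hB : ∀ i j, B i j ≤ 0) (i : n) (j : m) : 0 ≤ (-(A⁻¹ * B)) i j := by
  have hcol : (-(A⁻¹ * B)) i j = (A⁻¹ *ᵥ fun k => -B k j) i := by
    simp [mul_apply, mulVec, dotProduct]
  rw [hcol]
  exact inv_mulVec_nonneg hmono (fun k => neg_nonneg.2 (hB k j)) i

theorem neg_inv_mul_mulVec_one [Fintype m] (hA : IsUnit A.det) {B : Matrix n m ℝ}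
    (hB : B *ᵥ 1 = -(A *ᵥ 1)) : -(A⁻¹ * B) *ᵥ 1 = 1 := by
  rw [neg_mulVec, ← mulVec_mulVec, hB, mulVec_neg, neg_neg, mulVec_mulVec, nonsing_inv_mul _ hA,
    one_mulVec]

end MonotoneMatrix

theorem stmt_19_general (M K : ℕ)
    (L : Matrix (Fin M ⊕ Fin K) (Fin M ⊕ Fin K) ℝ)
    (hoff : ∀ i j, i ≠ j → L i j ≤ 0)
    (hrow : ∀ i, ∑ j, L i j = 0)
    (hreach : ∀ i : Fin K, ∃ j : Fin M,
      Relation.ReflTransGen (fun u v : Fin M ⊕ Fin K => L v u < 0) (Sum.inl j) (Sum.inr i)) :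
    IsUnit (L.toBlocks₂₂).det ∧
      (∀ i j, 0 ≤ (-(L.toBlocks₂₂⁻¹ * L.toBlocks₂₁)) i j) ∧
      ∀ i, ∑ j, (-(L.toBlocks₂₂⁻¹ * L.toBlocks₂₁)) i j = 1 := by
  have hmono : ∀ z, 0 ≤ L.toBlocks₂₂ *ᵥ z → 0 ≤ z := fun _ =>
    nonneg_of_toBlocks₂₂_mulVec_nonneg hoff hrow hreach
  have hdet := isUnit_det_of_mulVec_nonneg_imp hmono
  refine ⟨hdet, neg_inv_mul_nonneg hmono fun k j => hoff _ _ Sum.inr_ne_inl, fun i => ?_⟩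
  have hsum := congrFun (neg_inv_mul_mulVec_one hdet (toBlocks₂₁_mulVec_one hrow)) i
  simpa only [mulVec, dotProduct, Pi.one_apply, mul_one] using hsum

theorem stmt_19 (M K : ℕ)
    (L : Matrix (Fin M ⊕ Fin K) (Fin M ⊕ Fin K) ℝ)
    (hoff : ∀ i j, i ≠ j → L i j ≤ 0)
    (hrow : ∀ i, ∑ j, L i j = 0)
    (htop : ∀ (i : Fin M) (j : Fin M ⊕ Fin K), L (Sum.inl i) j = 0)
    (hreach : ∀ i : Fin K, ∃ j : Fin M,
      Relation.ReflTransGen (fun u v : Fin M ⊕ Fin K => L v u < 0) (Sum.inl j) (Sum.inr i)) :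
    IsUnit (L.toBlocks₂₂).det ∧
      (∀ i j, 0 ≤ (-(L.toBlocks₂₂⁻¹ * L.toBlocks₂₁)) i j) ∧
      ∀ i, ∑ j, (-(L.toBlocks₂₂⁻¹ * L.toBlocks₂₁)) i j = 1 :=
  stmt_19_general M K L hoff hrow hreach
end
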